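/- arXiv:math/0011136 — 2 statements merged into one kernel-verified Lean document; each statement's English description precedes it below -/
import Mathlib

section
/- The Funk metric of a strongly convex domain Ω, defined implicitly by x + y/F(x,y) ∈ ∂Ω, satisfies Okada's equations ∂F/∂xⁱ = F · ∂F/∂yⁱ for each i. -/
lemma ray_frontier_unique {E : Type*} [NormedAddCommGroup E] [NormedSpace ℝ E]
    {Ω : Set E} (hopen : IsOpen Ω) (hconv : Convex ℝ Ω) {x z : E} (hx : x ∈ Ω)
    {s t : ℝ} (hs : 0 < s) (ht : 0 < t)
    (hs' : x + s • z ∈ frontier Ω) (ht' : x + t • z ∈ frontier Ω) : s = t := by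
  have key : ∀ s t : ℝ, 0 < s → s < t → x + s • z ∈ frontier Ω → x + t • z ∈ frontier Ω → False := by
    intro s t hs hst hs' ht'
    have hmem : x + s • z ∈ openSegment ℝ x (x + t • z) := by
      refine ⟨1 - s / t, s / t, ?_, div_pos hs (hs.trans hst), by ring, ?_⟩
      · have : s / t < 1 := (div_lt_one (hs.trans hst)).mpr hst
        linarith
      · have htne : t ≠ 0 := (hs.trans hst).ne'
        rw [smul_add, smul_smul, div_mul_cancel₀ _ htne]
        module
    have : x + s • z ∈ interior Ω := by
      refine hconv.openSegment_interior_closure_subset_interior ?_ ?_ hmem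
      · rwa [hopen.interior_eq]
      · exact frontier_subset_closure ht'
    rw [hopen.interior_eq] at this
    exact hs'.2 (by rwa [hopen.interior_eq])
  rcases lt_trichotomy s t with h | h | h
  · exact absurd (key s t hs h hs' ht') (fun f => f)
  · exact h
  · exact absurd (key t s ht h ht' hs') (fun f => f)

/-- Okada's equations for the Funk metric `F` of a bounded strongly convex
smooth domain `Ω`, defined implicitly by `x + y / F(x,y) ∈ ∂Ω`:
`∂F/∂xⁱ = F ∂F/∂yⁱ`. -/
theorem okada_equation {n : ℕ}
    (Ω : Set (EuclideanSpace ℝ (Fin n)))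
    (hopen : IsOpen Ω) (hbdd : Bornology.IsBounded Ω)
    (hconv : StrictConvex ℝ Ω)
    (F : EuclideanSpace ℝ (Fin n) → EuclideanSpace ℝ (Fin n) → ℝ)
    (hpos : ∀ x ∈ Ω, ∀ y : EuclideanSpace ℝ (Fin n), y ≠ 0 → 0 < F x y)
    (hdef : ∀ x ∈ Ω, ∀ y : EuclideanSpace ℝ (Fin n), y ≠ 0 →
      x + (F x y)⁻¹ • y ∈ frontier Ω)
    (hhom : ∀ x ∈ Ω, ∀ (l : ℝ), 0 < l → ∀ y : EuclideanSpace ℝ (Fin n), y ≠ 0 →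
      F x (l • y) = l * F x y)
    (hsmooth : ContDiffOn ℝ (⊤ : ℕ∞) (fun p : EuclideanSpace ℝ (Fin n) × EuclideanSpace ℝ (Fin n) =>
      F p.1 p.2) (Ω ×ˢ {(0 : EuclideanSpace ℝ (Fin n))}ᶜ)) :
    ∀ x ∈ Ω, ∀ y : EuclideanSpace ℝ (Fin n), y ≠ 0 → ∀ i : Fin n,
      fderiv ℝ (fun x' => F x' y) x (EuclideanSpace.single i 1) =
        F x y * fderiv ℝ (fun y' => F x y') y (EuclideanSpace.single i 1) := by
  intro x hx y hy i
  set G : (EuclideanSpace ℝ (Fin n)) × (EuclideanSpace ℝ (Fin n)) → ℝ := fun p => F p.1 p.2 with hGdef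
  have hSopen : IsOpen (Ω ×ˢ {(0:(EuclideanSpace ℝ (Fin n)))}ᶜ) := hopen.prod isOpen_compl_singleton
  have hFpos := hpos x hx y hy
  set l : ℝ := (F x y)⁻¹ with hl
  have hlpos : 0 < l := inv_pos.mpr hFpos
  have hly : l • y ≠ 0 := smul_ne_zero hlpos.ne' hy
  -- differentiability of G at points of the open set
  have hdiff : ∀ q : (EuclideanSpace ℝ (Fin n)) × (EuclideanSpace ℝ (Fin n)), q ∈ Ω ×ˢ {(0:(EuclideanSpace ℝ (Fin n)))}ᶜ → HasFDerivAt G (fderiv ℝ G q) q := by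
    intro q hq
    have := (hsmooth.contDiffAt (hSopen.mem_nhds hq)).differentiableAt (by simp)
    exact this.hasFDerivAt
  have hxyS : (x, y) ∈ Ω ×ˢ {(0:(EuclideanSpace ℝ (Fin n)))}ᶜ := ⟨hx, hy⟩
  have hxlyS : (x, l • y) ∈ Ω ×ˢ {(0:(EuclideanSpace ℝ (Fin n)))}ᶜ := ⟨hx, hly⟩
  set A := fderiv ℝ G (x, y) with hA
  set A' := fderiv ℝ G (x, l • y) with hA'
  have hGA : HasFDerivAt G A (x, y) := hdiff _ hxyS
  have hGA' : HasFDerivAt G A' (x, l • y) := hdiff _ hxlyS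
  -- slice derivatives at (x,y)
  have hι1 : ∀ (w : (EuclideanSpace ℝ (Fin n))), HasFDerivAt (fun x' : (EuclideanSpace ℝ (Fin n)) => (x', w)) ((ContinuousLinearMap.id ℝ (EuclideanSpace ℝ (Fin n))).prod 0) x :=
    fun w => HasFDerivAt.prodMk (hasFDerivAt_id x) (hasFDerivAt_const w x)
  have hslice1 : HasFDerivAt (fun x' => F x' y)
      (A.comp ((ContinuousLinearMap.id ℝ (EuclideanSpace ℝ (Fin n))).prod 0)) x := by have := hGA.comp x (hι1 y); exact this
  have hι2 : ∀ (b : (EuclideanSpace ℝ (Fin n))), HasFDerivAt (fun y' : (EuclideanSpace ℝ (Fin n)) => (x, y'))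
      ((0 : (EuclideanSpace ℝ (Fin n)) →L[ℝ] (EuclideanSpace ℝ (Fin n))).prod (ContinuousLinearMap.id ℝ (EuclideanSpace ℝ (Fin n)))) b :=
    fun b => HasFDerivAt.prodMk (hasFDerivAt_const x b) (hasFDerivAt_id b)
  have hslice2 : HasFDerivAt (fun y' => F x y')
      (A.comp ((0 : (EuclideanSpace ℝ (Fin n)) →L[ℝ] (EuclideanSpace ℝ (Fin n))).prod (ContinuousLinearMap.id ℝ (EuclideanSpace ℝ (Fin n))))) y := hGA.comp y (hι2 y)
  -- (i) A' (v,0) = l * A (v,0)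
  have hx1 : HasFDerivAt (fun x' => F x' (l • y))
      (A'.comp ((ContinuousLinearMap.id ℝ (EuclideanSpace ℝ (Fin n))).prod 0)) x := by have := hGA'.comp x (hι1 (l • y)); exact this
  have hx2 : HasFDerivAt (fun x' => F x' (l • y))
      (l • A.comp ((ContinuousLinearMap.id ℝ (EuclideanSpace ℝ (Fin n))).prod 0)) x := by
    have hev : (fun x' => F x' (l • y)) =ᶠ[nhds x] (fun x' => l * F x' y) :=
      Filter.eventually_of_mem (hopen.mem_nhds hx) (fun x' hx' => hhom x' hx' l hlpos y hy)
    exact (hslice1.const_mul l).congr_of_eventuallyEq hev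
  have heq1 : A'.comp ((ContinuousLinearMap.id ℝ (EuclideanSpace ℝ (Fin n))).prod 0)
      = l • A.comp ((ContinuousLinearMap.id ℝ (EuclideanSpace ℝ (Fin n))).prod 0) := hx1.unique hx2
  -- (ii) A' (0,v) = A (0,v)
  have hy1 : HasFDerivAt (fun y' : (EuclideanSpace ℝ (Fin n)) => F x (l • y'))
      ((A'.comp ((0 : (EuclideanSpace ℝ (Fin n)) →L[ℝ] (EuclideanSpace ℝ (Fin n))).prod (ContinuousLinearMap.id ℝ (EuclideanSpace ℝ (Fin n))))).comp
        (l • ContinuousLinearMap.id ℝ (EuclideanSpace ℝ (Fin n)))) y := by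
    have hsmul : HasFDerivAt (fun y' : (EuclideanSpace ℝ (Fin n)) => l • y') (l • ContinuousLinearMap.id ℝ (EuclideanSpace ℝ (Fin n))) y :=
      (hasFDerivAt_id y).const_smul l
    have houter : HasFDerivAt (fun y'' => F x y'')
        (A'.comp ((0 : (EuclideanSpace ℝ (Fin n)) →L[ℝ] (EuclideanSpace ℝ (Fin n))).prod (ContinuousLinearMap.id ℝ (EuclideanSpace ℝ (Fin n))))) (l • y) :=
      hGA'.comp (l • y) (hι2 (l • y))
    exact houter.comp y hsmul
  have hy2 : HasFDerivAt (fun y' : (EuclideanSpace ℝ (Fin n)) => F x (l • y'))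
      (l • A.comp ((0 : (EuclideanSpace ℝ (Fin n)) →L[ℝ] (EuclideanSpace ℝ (Fin n))).prod (ContinuousLinearMap.id ℝ (EuclideanSpace ℝ (Fin n))))) y := by
    have hev : (fun y' : (EuclideanSpace ℝ (Fin n)) => F x (l • y')) =ᶠ[nhds y] (fun y' => l * F x y') :=
      Filter.eventually_of_mem (isOpen_compl_singleton.mem_nhds hy)
        (fun y' hy' => hhom x hx l hlpos y' hy')
    exact (hslice2.const_mul l).congr_of_eventuallyEq hev
  have heq2 : (A'.comp ((0 : (EuclideanSpace ℝ (Fin n)) →L[ℝ] (EuclideanSpace ℝ (Fin n))).prod (ContinuousLinearMap.id ℝ (EuclideanSpace ℝ (Fin n))))).comp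
        (l • ContinuousLinearMap.id ℝ (EuclideanSpace ℝ (Fin n)))
      = l • A.comp ((0 : (EuclideanSpace ℝ (Fin n)) →L[ℝ] (EuclideanSpace ℝ (Fin n))).prod (ContinuousLinearMap.id ℝ (EuclideanSpace ℝ (Fin n)))) := hy1.unique hy2
  -- (iii) the constancy relation
  set p : (EuclideanSpace ℝ (Fin n)) := x + l • y with hp
  have hpfr : p ∈ frontier Ω := hdef x hx y hy
  have hpnot : p ∉ Ω := fun h => hpfr.2 (by rwa [hopen.interior_eq])
  have hone : ∀ x' ∈ Ω, F x' (p - x') = 1 := by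
    intro x' hx'
    have hne : p - x' ≠ 0 := sub_ne_zero.mpr (fun h => hpnot (h ▸ hx'))
    have h1 : x' + (F x' (p - x'))⁻¹ • (p - x') ∈ frontier Ω := hdef x' hx' _ hne
    have h2 : x' + (1 : ℝ) • (p - x') ∈ frontier Ω := by
      rw [one_smul, add_sub_cancel]; exact hpfr
    have := ray_frontier_unique hopen hconv.convex hx'
      (inv_pos.mpr (hpos x' hx' _ hne)) one_pos h1 h2
    have hFne : F x' (p - x') ≠ 0 := (hpos x' hx' _ hne).ne'
    field_simp at this
    exact this.symm
  have hconst : HasFDerivAt (fun x' : (EuclideanSpace ℝ (Fin n)) => F x' (p - x')) (0 : (EuclideanSpace ℝ (Fin n)) →L[ℝ] ℝ) x := by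
    have hev : (fun x' : (EuclideanSpace ℝ (Fin n)) => F x' (p - x')) =ᶠ[nhds x] (fun _ => (1:ℝ)) :=
      Filter.eventually_of_mem (hopen.mem_nhds hx) (fun x' hx' => hone x' hx')
    exact (hasFDerivAt_const (1:ℝ) x).congr_of_eventuallyEq hev
  have hcomp : HasFDerivAt (fun x' : (EuclideanSpace ℝ (Fin n)) => F x' (p - x'))
      (A'.comp ((ContinuousLinearMap.id ℝ (EuclideanSpace ℝ (Fin n))).prod
        (0 - ContinuousLinearMap.id ℝ (EuclideanSpace ℝ (Fin n))))) x := by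
    have hinner : HasFDerivAt (fun x' : (EuclideanSpace ℝ (Fin n)) => ((x' : (EuclideanSpace ℝ (Fin n))), p - x'))
        ((ContinuousLinearMap.id ℝ (EuclideanSpace ℝ (Fin n))).prod (0 - ContinuousLinearMap.id ℝ (EuclideanSpace ℝ (Fin n)))) x :=
      HasFDerivAt.prodMk (hasFDerivAt_id x) ((hasFDerivAt_const p x).sub (hasFDerivAt_id x))
    have hpx : p - x = l • y := by rw [hp]; abel
    have houter : HasFDerivAt G A' ((x : (EuclideanSpace ℝ (Fin n))), p - x) := by rw [hpx]; exact hGA'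
    exact houter.comp x hinner
  have heq3 : A'.comp ((ContinuousLinearMap.id ℝ (EuclideanSpace ℝ (Fin n))).prod
      (0 - ContinuousLinearMap.id ℝ (EuclideanSpace ℝ (Fin n)))) = 0 := hcomp.unique hconst
  -- put things together, evaluating at v = single i 1
  set v : (EuclideanSpace ℝ (Fin n)) := EuclideanSpace.single i 1 with hv
  have e1 : A' (v, 0) = l * A (v, 0) := by
    have := congrFun (congrArg DFunLike.coe heq1) v
    simpa using this
  have e2 : l * A' (0, v) = l * A (0, v) := by
    have := congrFun (congrArg DFunLike.coe heq2) v
    simpa [smul_smul] using this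
  have e2' : A' (0, v) = A (0, v) := mul_left_cancel₀ hlpos.ne' e2
  have e3 : A' (v, -v) = 0 := by
    have := congrFun (congrArg DFunLike.coe heq3) v
    simpa using this
  have e4 : A' (v, 0) = A' (0, v) := by
    have hsplit : ((v, -v) : (EuclideanSpace ℝ (Fin n)) × (EuclideanSpace ℝ (Fin n))) = (v, 0) + (0, -v) := by simp
    have := A'.map_add (v, 0) (0, -v)
    rw [← hsplit, e3] at this
    have h5 : A' (0, -v) = - A' (0, v) := by
      have : ((0, -v) : (EuclideanSpace ℝ (Fin n)) × (EuclideanSpace ℝ (Fin n))) = -(0, v) := by simp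
      rw [this, A'.map_neg]
    rw [h5] at this
    linarith [this]
  -- rewrite the goal
  have g1 : fderiv ℝ (fun x' => F x' y) x v = A (v, 0) := by
    rw [hslice1.fderiv]; rfl
  have g2 : fderiv ℝ (fun y' => F x y') y v = A (0, v) := by
    rw [hslice2.fderiv]; rfl
  rw [g1, g2]
  have : l * A (v, 0) = A (0, v) := by rw [← e1, e4, e2']
  have hFl : F x y = l⁻¹ := by rw [hl, inv_inv]
  rw [hFl, ← this]
  field_simp
end

section
/- For κ < 0 and κ̃ < 0, the function φ(t) = (κ̃/κ)^{1/4} is a constant solution of the ODE φ''(t) + κ φ(t) = κ̃/φ(t)³; moreover, any positive solution φ of this ODE with κ = κ̃ = −1 that is bounded above and below by positive constants on all of ℝ must be constant equal to 1. -/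
/-!
The constant is checked directly. For the rigidity statement, the ODE `φ'' = φ - φ⁻³` is
conservative with energy `C = φ'² - φ² - φ⁻²`, and using it `u = φ²` satisfies the *linear*
equation `u'' = 4u + 2C`. A solution of `v'' = a²v` on `ℝ` is `αe^{at} + βe^{-at}`, so it can
only stay bounded if it vanishes; hence `φ²` is constant, `φ'' = 0`, and `φ = φ⁻³` forces `φ = 1`.
-/

open Real Filter

lemma eq_of_hasDerivAt_zero {f : ℝ → ℝ} (hf : ∀ t, HasDerivAt f 0 t) (t : ℝ) : f t = f 0 :=
  is_const_of_deriv_eq_zero (fun x => (hf x).differentiableAt) (fun x => (hf x).deriv) t 0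

lemma eq_mul_exp_of_hasDerivAt {f : ℝ → ℝ} {c : ℝ} (hf : ∀ t, HasDerivAt f (c * f t) t)
    (t : ℝ) : f t = f 0 * exp (c * t) := by
  have hg : ∀ s, HasDerivAt (fun s => f s * exp (-(c * s))) 0 s := fun s =>
    ((hf s).mul (((hasDerivAt_id s).const_mul c).neg.exp)).congr_deriv (by simp; ring)
  have h := eq_of_hasDerivAt_zero hg t
  simp only [mul_zero, neg_zero, exp_zero, mul_one] at h
  rw [← h, mul_assoc, ← exp_add, neg_add_cancel, exp_zero, mul_one]

lemma eq_zero_of_abs_mul_exp_le {a c K : ℝ} (ha : 0 < a)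
    (h : ∀ t, 0 ≤ t → |c| * exp (a * t) ≤ K) : c = 0 := by
  by_contra hc
  have hc' : 0 < |c| := abs_pos.mpr hc
  obtain ⟨t, ht, ht0⟩ := (((tendsto_exp_atTop.comp (tendsto_id.const_mul_atTop ha)).eventually_gt_atTop
    (K / |c|)).and (eventually_ge_atTop 0)).exists
  have hle := h t ht0
  rw [Function.comp_apply, id, div_lt_iff₀ hc'] at ht
  linarith

theorem eq_zero_of_hasDerivAt_sq_mul_of_abs_le {v v' : ℝ → ℝ} {a K : ℝ} (ha : 0 < a)
    (hv : ∀ t, HasDerivAt v (v' t) t) (hv' : ∀ t, HasDerivAt v' (a ^ 2 * v t) t)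
    (hK : ∀ t, |v t| ≤ K) (t : ℝ) : v t = 0 := by
  have hw : ∀ t, v' t - a * v t = (v' 0 - a * v 0) * exp (-a * t) :=
    eq_mul_exp_of_hasDerivAt (f := fun t => v' t - a * v t) fun s =>
      ((hv' s).sub ((hv s).const_mul a)).congr_deriv (by ring)
  have hz : ∀ t, v' t + a * v t = (v' 0 + a * v 0) * exp (a * t) :=
    eq_mul_exp_of_hasDerivAt (f := fun t => v' t + a * v t) fun s =>
      ((hv' s).add ((hv s).const_mul a)).congr_deriv (by ring)
  have hz0 : v' 0 + a * v 0 = 0 := by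
    refine eq_zero_of_abs_mul_exp_le ha (K := 2 * a * K + |v' 0 - a * v 0|) fun s hs => ?_
    have hws : |v' s - a * v s| ≤ |v' 0 - a * v 0| := by
      rw [hw, abs_mul, abs_of_pos (exp_pos _)]
      exact mul_le_of_le_one_right (abs_nonneg _) (exp_le_one_iff.mpr (by nlinarith))
    calc |v' 0 + a * v 0| * exp (a * s) = |2 * a * v s + (v' s - a * v s)| := by
          rw [← abs_of_pos (exp_pos (a * s)), ← abs_mul, ← hz]; ring_nf
      _ ≤ 2 * a * K + |v' 0 - a * v 0| := by
          refine (abs_add_le _ _).trans (add_le_add ?_ hws)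
          rw [abs_mul, abs_of_pos (by positivity : 0 < 2 * a)]
          exact mul_le_mul_of_nonneg_left (hK s) (by positivity)
  have hdecay : ∀ t, v t = v 0 * exp (-a * t) :=
    eq_mul_exp_of_hasDerivAt fun s => (hv s).congr_deriv (by linarith [hz0 ▸ hz s])
  have hv0 : v 0 = 0 := eq_zero_of_abs_mul_exp_le ha fun s _ => by
    simpa [hdecay (-s), abs_mul] using hK (-s)
  rw [hdecay, hv0, zero_mul]

theorem energy_conservation {φ φ' G g : ℝ → ℝ} (hφ : ∀ t, HasDerivAt φ (φ' t) t)
    (hφ' : ∀ t, HasDerivAt φ' (g (φ t)) t) (hG : ∀ t, HasDerivAt G (2 * g (φ t)) (φ t))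
    (t : ℝ) : φ' t ^ 2 - G (φ t) = φ' 0 ^ 2 - G (φ 0) :=
  eq_of_hasDerivAt_zero (f := fun t => φ' t ^ 2 - G (φ t))
    (fun s => (((hφ' s).pow 2).sub ((hG s).comp s (hφ s))).congr_deriv (by ring)) t

lemma hasDerivAt_sq_add_inv_sq {x : ℝ} (hx : x ≠ 0) :
    HasDerivAt (fun x => x ^ 2 + (x ^ 2)⁻¹) (2 * (x - (x ^ 3)⁻¹)) x :=
  ((hasDerivAt_pow 2 x).add ((hasDerivAt_pow 2 x).inv (pow_ne_zero 2 hx))).congr_deriv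
    (by field_simp; ring)

theorem eq_one_of_hasDerivAt_sub_inv_pow_three_of_le {φ φ' : ℝ → ℝ} {M : ℝ} (hφ : ∀ t, HasDerivAt φ (φ' t) t)
    (hφ' : ∀ t, HasDerivAt φ' (φ t - (φ t ^ 3)⁻¹) t) (hpos : ∀ t, 0 < φ t)
    (hM : ∀ t, φ t ≤ M) (t : ℝ) : φ t = 1 := by
  obtain ⟨C, hE⟩ : ∃ C, ∀ t, φ' t ^ 2 - (φ t ^ 2 + (φ t ^ 2)⁻¹) = C :=
    ⟨_, energy_conservation (G := fun x => x ^ 2 + (x ^ 2)⁻¹) (g := fun x => x - (x ^ 3)⁻¹) hφ hφ'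
      fun s => hasDerivAt_sq_add_inv_sq (hpos s).ne'⟩
  have hsq : ∀ t, φ t ^ 2 + C / 2 = 0 := by
    refine eq_zero_of_hasDerivAt_sq_mul_of_abs_le (v' := fun s => 2 * φ s * φ' s) two_pos
      (fun s => (((hφ s).pow 2).add_const _).congr_deriv (by ring))
      (fun s => (((hφ s).const_mul 2).mul (hφ' s)).congr_deriv ?_)
      (K := M ^ 2 + |C| / 2) fun s => ?_
    · have h0 := (hpos s).ne'
      rw [← hE s]
      field_simp
      ring
    · have hs := hpos s
      have hsM : φ s ^ 2 ≤ M ^ 2 := pow_le_pow_left₀ hs.le (hM s) 2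
      rw [abs_le]
      constructor <;> linarith [neg_abs_le C, le_abs_self C, sq_nonneg (φ s)]
  have hconst : φ = fun _ => φ 0 := funext fun s =>
    (pow_left_inj₀ (hpos s).le (hpos 0).le two_ne_zero).mp (by linarith [hsq s, hsq 0])
  have hφ'_zero : ∀ s, φ' s = 0 := fun s =>
    (hφ s).unique (by rw [hconst]; exact hasDerivAt_const s _)
  have hfix : φ t - (φ t ^ 3)⁻¹ = 0 :=
    (hφ' t).unique (by rw [funext hφ'_zero]; exact hasDerivAt_const t _)
  have h4 : φ t ^ 4 = 1 := by
    have h0 := (hpos t).ne'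
    field_simp at hfix
    linear_combination hfix
  exact (pow_eq_one_iff_of_nonneg (hpos t).le four_ne_zero).mp h4

lemma mul_rpow_one_div_four_eq_div_pow_three {κ κt : ℝ} (hκ : κ ≠ 0) (hq : 0 < κt / κ) :
    κ * (κt / κ) ^ ((1 : ℝ) / 4) = κt / ((κt / κ) ^ ((1 : ℝ) / 4)) ^ 3 := by
  have hc : 0 < (κt / κ) ^ ((1 : ℝ) / 4) := rpow_pos_of_pos hq _
  have h4 : ((κt / κ) ^ ((1 : ℝ) / 4)) ^ 4 = κt / κ := by
    rw [← rpow_natCast, ← rpow_mul hq.le]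
    norm_num
  rw [eq_div_iff (pow_ne_zero 3 hc.ne')]
  calc κ * (κt / κ) ^ ((1 : ℝ) / 4) * ((κt / κ) ^ ((1 : ℝ) / 4)) ^ 3
      = κ * ((κt / κ) ^ ((1 : ℝ) / 4)) ^ 4 := by ring
    _ = κt := by rw [h4]; field_simp

/-- For `κ < 0`, `κ̃ < 0`, the constant `(κ̃/κ)^{1/4}` solves
`φ'' + κ φ = κ̃/φ³`; and any positive solution with `κ = κ̃ = -1` that is
pinched between positive constants on all of `ℝ` is identically `1`. -/
theorem projective_ode_constant_solution (κ κt : ℝ) (hκ : κ < 0) (hκt : κt < 0) :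
    (∀ t : ℝ,
      deriv (deriv (fun _ : ℝ => (κt / κ) ^ ((1 : ℝ) / 4))) t +
        κ * (κt / κ) ^ ((1 : ℝ) / 4) =
      κt / ((κt / κ) ^ ((1 : ℝ) / 4)) ^ 3) ∧
    (∀ φ : ℝ → ℝ, ContDiff ℝ 2 φ → (∀ t : ℝ, 0 < φ t) →
      (∀ t : ℝ, deriv (deriv φ) t + (-1) * φ t = (-1) / (φ t) ^ 3) →
      (∃ m M : ℝ, 0 < m ∧ ∀ t : ℝ, m ≤ φ t ∧ φ t ≤ M) →
      ∀ t : ℝ, φ t = 1) := by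
  refine ⟨fun t => ?_, fun φ hφ hpos hode hbd t => ?_⟩
  · rw [deriv_const', deriv_const, zero_add]
    exact mul_rpow_one_div_four_eq_div_pow_three hκ.ne (div_pos_of_neg_of_neg hκt hκ)
  · obtain ⟨_, M, -, hM⟩ := hbd
    have hφ2 : Differentiable ℝ (deriv φ) :=
      ((contDiff_succ_iff_deriv (n := 1)).mp hφ).2.2.differentiable one_ne_zero
    refine eq_one_of_hasDerivAt_sub_inv_pow_three_of_le (fun s => (hφ.differentiable two_ne_zero s).hasDerivAt)
      (fun s => (hφ2 s).hasDerivAt.congr_deriv ?_) hpos (fun s => (hM s).2) t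
    linear_combination hode s
end
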